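/- Let d ≥ 2 and let T be a Toeplitz operator on ℓ²(ℕᵈ, ℂ) (S_i* T S_i = T for all i) with symbol coefficients φ(k), k ∈ ℤᵈ, and let C be a conjugation on ℓ²(ℕᵈ, ℂ) with canonical factorization C = U ∘ J (U := C ∘ J unitary, J the canonical conjugation fixing each e_k). Then the following are equivalent: (1) T is C-symmetric (C T* C = T); (2) ⟨T e_l, e_k⟩ = ⟨T (C e_k), (C e_l)⟩ for all k, l ∈ ℕᵈ; (3) φ(k − l) = ⟨U* T U e_k, e_l⟩ for all k, l ∈ ℕᵈ. -/

import Mathlib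

/-!
A conjugation `C` satisfies `⟪C x, C y⟫ = ⟪y, x⟫` (polarization), hence `⟪x, C y⟫ = ⟪y, C x⟫`, so
the matrix entry `⟪e_k, C T* C e_l⟫` of `C T* C` equals `⟪C e_l, T C e_k⟫`; this gives (1) ⇔ (2) in
any Hilbert basis. For the converse one first gets `C T C e_l = T* e_l` from (2) with `k, l`
swapped, which is what lets the identity pass from basis vectors to arbitrary vectors. Since `J`
fixes the basis, `C e_k = U e_k`, so the entries in (2) are those of `U* T U`, while the left-hand
side of (2) is `φ(k − l)` by definition of the symbol: this is (3).
-/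

noncomputable section
open scoped ComplexConjugate
open ContinuousLinearMap

/-- A conjugation on a complex Hilbert space: an antilinear, involutive, isometric map. -/
def IsConjugation {E : Type*} [NormedAddCommGroup E] [InnerProductSpace ℂ E] (C : E → E) : Prop :=
  (∀ (a : ℂ) (f g : E), C (a • f + g) = conj a • C f + C g) ∧
  (∀ f, C (C f) = f) ∧
  (∀ f, ‖C f‖ = ‖f‖)

/-- The inner product in the paper's convention: linear in the first argument and
conjugate-linear in the second (Mathlib's `inner` with the arguments swapped). -/
def ip {E : Type*} [NormedAddCommGroup E] [InnerProductSpace ℂ E] (x y : E) : ℂ :=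
  inner ℂ y x

/-- `ℓ²(ℕᵈ, ℂ)`, identified with the Hardy space `H²(𝔻ᵈ)`. -/
abbrev Ell2d (d : ℕ) : Type := lp (fun _ : (Fin d → ℕ) => ℂ) 2

/-- The standard orthonormal basis of `ℓ²(ℕᵈ, ℂ)`. -/
def ed {d : ℕ} (k : Fin d → ℕ) : Ell2d d := lp.single 2 k 1

open scoped ComplexInnerProductSpace InnerProductSpace lp

namespace IsConjugation

variable {E : Type*} [NormedAddCommGroup E] [InnerProductSpace ℂ E] {C : E → E}

lemma map_add (hC : IsConjugation C) (x y : E) : C (x + y) = C x + C y := by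
  simpa using hC.1 1 x y

lemma map_zero (hC : IsConjugation C) : C 0 = 0 := by
  simpa using hC.map_add 0 0

lemma map_smul (hC : IsConjugation C) (a : ℂ) (x : E) : C (a • x) = conj a • C x := by
  simpa [hC.map_zero] using hC.1 a x 0

lemma map_sub (hC : IsConjugation C) (x y : E) : C (x - y) = C x - C y :=
  eq_sub_of_add_eq (by rw [← hC.map_add, sub_add_cancel])

lemma apply_apply (hC : IsConjugation C) (x : E) : C (C x) = x := hC.2.1 x

lemma norm_map (hC : IsConjugation C) (x : E) : ‖C x‖ = ‖x‖ := hC.2.2 x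

lemma inner_map_map (hC : IsConjugation C) (x y : E) : ⟪C x, C y⟫ = ⟪y, x⟫ := by
  have h_add : ‖C x + C y‖ = ‖x + y‖ := by rw [← hC.map_add, hC.norm_map]
  have h_sub : ‖C x - C y‖ = ‖x - y‖ := by rw [← hC.map_sub, hC.norm_map]
  have h_sub_I : C x - Complex.I • C y = C (x + Complex.I • y) := by
    rw [hC.map_add, hC.map_smul, Complex.conj_I, neg_smul, sub_eq_add_neg]
  have h_add_I : C x + Complex.I • C y = C (x - Complex.I • y) := by
    rw [hC.map_sub, hC.map_smul, Complex.conj_I, neg_smul, sub_neg_eq_add]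
  have h_polarization : ⟪C x, C y⟫ = conj ⟪x, y⟫ := by
    rw [inner_eq_sum_norm_sq_div_four (𝕜 := ℂ), inner_eq_sum_norm_sq_div_four (𝕜 := ℂ),
      RCLike.I_to_complex, h_add, h_sub, h_sub_I, h_add_I, hC.norm_map, hC.norm_map]
    simp only [map_div₀, _root_.map_add, _root_.map_sub, map_mul, map_pow, RCLike.conj_ofReal,
      Complex.conj_I, map_ofNat]
    ring
  rw [h_polarization, inner_conj_symm]

lemma inner_map_right_comm (hC : IsConjugation C) (x y : E) : ⟪x, C y⟫ = ⟪y, C x⟫ := by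
  rw [← hC.inner_map_map (C y) x, hC.apply_apply]

end IsConjugation

lemma HilbertBasis.ext_inner {ι 𝕜 E : Type*} [RCLike 𝕜] [NormedAddCommGroup E]
    [InnerProductSpace 𝕜 E] (b : HilbertBasis ι 𝕜 E) {v w : E}
    (h : ∀ i, ⟪b i, v⟫_𝕜 = ⟪b i, w⟫_𝕜) : v = w :=
  b.repr.injective (lp.ext (funext fun i => by simp only [b.repr_apply_apply, h]))

lemma HilbertBasis.default_apply {ι 𝕜 : Type*} [RCLike 𝕜] [DecidableEq ι] (i : ι) :
    (default : HilbertBasis ι 𝕜 ℓ²(ι, 𝕜)) i = lp.single 2 i 1 :=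
  (HilbertBasis.repr_symm_single default i).symm

section CSymmetric

variable {E : Type*} [NormedAddCommGroup E] [InnerProductSpace ℂ E] [CompleteSpace E]

def IsCSymmetric (C : E → E) (T : E →L[ℂ] E) : Prop :=
  ∀ x, C (adjoint T (C x)) = T x

theorem IsConjugation.isCSymmetric_iff_inner_basis {ι : Type*} {C : E → E} (hC : IsConjugation C)
    (b : HilbertBasis ι ℂ E) (T : E →L[ℂ] E) :
    IsCSymmetric C T ↔ ∀ k l, ⟪b k, T (b l)⟫ = ⟪C (b l), T (C (b k))⟫ := by
  constructor
  · intro hT k l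
    rw [← hT, hC.inner_map_right_comm, adjoint_inner_left]
  · intro h
    have h_adjoint : ∀ l, C (T (C (b l))) = adjoint T (b l) := fun l => b.ext_inner fun k => by
      rw [hC.inner_map_right_comm, ← inner_conj_symm, ← h l k, inner_conj_symm,
        adjoint_inner_right]
    intro x
    refine b.ext_inner fun l => ?_
    rw [hC.inner_map_right_comm, adjoint_inner_left, ← hC.apply_apply (T (C (b l))), h_adjoint,
      hC.inner_map_map, adjoint_inner_left]

end CSymmetric

theorem c_symmetric_toeplitz_polydisc_characterizations_general
    (d : ℕ)
    (T : Ell2d d →L[ℂ] Ell2d d)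
    (φ : (Fin d → ℤ) → ℂ)
    (hφ : ∀ k l : Fin d → ℕ, φ (fun j => (k j : ℤ) - (l j : ℤ)) = ip (T (ed l)) (ed k))
    (C : Ell2d d → Ell2d d) (hC : IsConjugation C)
    (J : Ell2d d → Ell2d d) (hJe : ∀ k, J (ed k) = ed k)
    (U : Ell2d d ≃ₗᵢ[ℂ] Ell2d d) (hU : ∀ x, C x = U (J x)) :
    ((∀ x, C (adjoint T (C x)) = T x) ↔
        ∀ k l : Fin d → ℕ, ip (T (ed l)) (ed k) = ip (T (C (ed k))) (C (ed l))) ∧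
    ((∀ x, C (adjoint T (C x)) = T x) ↔
        ∀ k l : Fin d → ℕ,
          φ (fun j => (k j : ℤ) - (l j : ℤ)) = ip (U.symm (T (U (ed k)))) (ed l)) := by
  have h_basis : ∀ k, (default : HilbertBasis (Fin d → ℕ) ℂ (Ell2d d)) k = ed k :=
    HilbertBasis.default_apply
  have h_symm : (∀ x, C (adjoint T (C x)) = T x) ↔
      ∀ k l : Fin d → ℕ, ip (T (ed l)) (ed k) = ip (T (C (ed k))) (C (ed l)) := by
    have h := hC.isCSymmetric_iff_inner_basis (default : HilbertBasis (Fin d → ℕ) ℂ _) T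
    simp only [h_basis] at h
    exact h
  have h_entries : ∀ k l : Fin d → ℕ,
      ip (T (C (ed k))) (C (ed l)) = ip (U.symm (T (U (ed k)))) (ed l) := fun k l => by
    simp only [ip, hU, hJe, U.inner_map_eq_flip]
  refine ⟨h_symm, h_symm.trans (forall₂_congr fun k l => ?_)⟩
  rw [hφ, h_entries]

/-- Let `d ≥ 2`, `T` a Toeplitz operator on `ℓ²(ℕᵈ, ℂ)` with symbol
coefficients `φ(k)`, and `C` a conjugation with canonical factorization `C = U ∘ J`.  Then the
following are equivalent: (1) `T` is `C`-symmetric; (2) `⟨T e_l, e_k⟩ = ⟨T (C e_k), C e_l⟩`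
for all `k, l ∈ ℕᵈ`; (3) `φ(k − l) = ⟨U* T U e_k, e_l⟩` for all `k, l ∈ ℕᵈ`. -/
theorem c_symmetric_toeplitz_polydisc_characterizations
    (d : ℕ) (hd : 2 ≤ d)
    (S : Fin d → (Ell2d d →L[ℂ] Ell2d d))
    (hS : ∀ (i : Fin d) (k : Fin d → ℕ), S i (ed k) = ed (k + Pi.single i 1))
    (T : Ell2d d →L[ℂ] Ell2d d)
    (hT : ∀ i, (adjoint (S i)).comp (T.comp (S i)) = T)
    (φ : (Fin d → ℤ) → ℂ)
    (hφ : ∀ k l : Fin d → ℕ, φ (fun j => (k j : ℤ) - (l j : ℤ)) = ip (T (ed l)) (ed k))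
    (C : Ell2d d → Ell2d d) (hC : IsConjugation C)
    (J : Ell2d d → Ell2d d) (hJ : IsConjugation J) (hJe : ∀ k, J (ed k) = ed k)
    (U : Ell2d d ≃ₗᵢ[ℂ] Ell2d d) (hU : ∀ x, C x = U (J x)) :
    ((∀ x, C (adjoint T (C x)) = T x) ↔
        ∀ k l : Fin d → ℕ, ip (T (ed l)) (ed k) = ip (T (C (ed k))) (C (ed l))) ∧
    ((∀ x, C (adjoint T (C x)) = T x) ↔
        ∀ k l : Fin d → ℕ,
          φ (fun j => (k j : ℤ) - (l j : ℤ)) = ip (U.symm (T (U (ed k)))) (ed l)) :=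
  c_symmetric_toeplitz_polydisc_characterizations_general d T φ hφ C hC J hJe U hU
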